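/- If Δ is a simplicial complex whose Stanley-Reisner ideal I_Δ is minimally generated by exactly two squarefree monomials, then Δ is vertex decomposable. -/

import Mathlib

open MvPolynomial

namespace Paper

abbrev R (K : Type) [Field K] (n : ℕ) := MvPolynomial (Fin n) K

noncomputable def mon (K : Type) [Field K] {n : ℕ} (a : Fin n →₀ ℕ) : R K n :=
  monomial a 1

def mdeg {n : ℕ} (a : Fin n →₀ ℕ) : ℕ := a.sum fun _ e => e

def IsSqfree {n : ℕ} (a : Fin n →₀ ℕ) : Prop := ∀ i, a i ≤ 1

variable {K : Type} [Field K] {n : ℕ}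

/-- A monomial ideal: an ideal generated by a set of monomials. -/
def IsMonomialIdeal (I : Ideal (R K n)) : Prop :=
  ∃ S : Set (Fin n →₀ ℕ), I = Ideal.span ((mon K) '' S)

/-- The (exponent vectors of the) minimal monomial generators `G(I)` of a monomial
ideal: monomials in `I` such that no proper divisor lies in `I`. -/
def minGens (I : Ideal (R K n)) : Set (Fin n →₀ ℕ) :=
  { a | mon K a ∈ I ∧ ∀ (b : Fin n →₀ ℕ) (i : Fin n),
      a = b + Finsupp.single i 1 → mon K b ∉ I }

/-- Polymatroidal: a monomial ideal generated in a single degree satisfying the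
exchange property. -/
def IsPolymatroidal (I : Ideal (R K n)) : Prop :=
  IsMonomialIdeal I ∧
  (∃ d, ∀ a ∈ minGens I, mdeg a = d) ∧
  ∀ u ∈ minGens I, ∀ v ∈ minGens I, ∀ i : Fin n, v i < u i →
    ∃ j : Fin n, u j < v j ∧
      ∃ w ∈ minGens I, w + Finsupp.single i 1 = u + Finsupp.single j 1

/-- Matroidal: squarefree polymatroidal. -/
def IsMatroidal (I : Ideal (R K n)) : Prop :=
  IsPolymatroidal I ∧ ∀ a ∈ minGens I, IsSqfree a

/-- Weakly polymatroidal with respect to the variable ordering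
`x_{σ 0} > x_{σ 1} > ... > x_{σ (n-1)}`. -/
def IsWeaklyPolymatroidalWrt (σ : Equiv.Perm (Fin n)) (I : Ideal (R K n)) : Prop :=
  IsMonomialIdeal I ∧
  ∀ u ∈ minGens I, ∀ v ∈ minGens I, ∀ t : Fin n,
    (∀ s, s < t → u (σ s) = v (σ s)) → v (σ t) < u (σ t) →
    ∃ j : Fin n, t < j ∧
      ∃ w : Fin n →₀ ℕ,
        w + Finsupp.single (σ j) 1 = v + Finsupp.single (σ t) 1 ∧ mon K w ∈ I

/-- Weakly polymatroidal with respect to the standard ordering `x_1 > ... > x_n`. -/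
def IsWeaklyPolymatroidal (I : Ideal (R K n)) : Prop :=
  IsWeaklyPolymatroidalWrt (Equiv.refl (Fin n)) I

/-- Vertex splittable monomial ideals (Moradi–Khosh-Ahang). Ideals of
`K[V \ {x}]` are encoded as ideals of `R` whose minimal generators do not
involve the variable `x`. -/
inductive VertexSplittable : Ideal (R K n) → Prop
  | principal (a : Fin n →₀ ℕ) : VertexSplittable (Ideal.span {mon K a})
  | bot : VertexSplittable ⊥
  | top : VertexSplittable ⊤
  | split (x : Fin n) (I₁ I₂ : Ideal (R K n)) :
      VertexSplittable I₁ → VertexSplittable I₂ →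
      (∀ a ∈ minGens I₁, a x = 0) → (∀ a ∈ minGens I₂, a x = 0) →
      I₂ ≤ I₁ →
      minGens (Ideal.span {(X x : R K n)} * I₁ + I₂)
        = minGens (Ideal.span {(X x : R K n)} * I₁) ∪ minGens I₂ →
      minGens (Ideal.span {(X x : R K n)} * I₁) ∩ minGens I₂ = ∅ →
      VertexSplittable (Ideal.span {(X x : R K n)} * I₁ + I₂)

/-- Linear quotients: some ordering of the minimal monomial generators such that
each successive colon ideal is generated by a subset of the variables. -/
def HasLinearQuotients (I : Ideal (R K n)) : Prop :=
  IsMonomialIdeal I ∧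
  ∃ L : List (Fin n →₀ ℕ), L.Nodup ∧ {a | a ∈ L} = minGens I ∧
    ∀ (j : ℕ) (hj : j < L.length), 0 < j →
      ∃ S : Set (Fin n),
        Submodule.colon (Ideal.span ((mon K) '' {a | a ∈ L.take j}))
            (Ideal.span {mon K (L.get ⟨j, hj⟩)})
          = Ideal.span ((fun i => (X i : R K n)) '' S)


/-- A (possibly void) abstract simplicial complex on the vertex set `Fin n`. -/
structure SComplex (n : ℕ) where
  faces : Finset (Finset (Fin n))
  down : ∀ F ∈ faces, ∀ G ⊆ F, G ∈ faces

variable {n : ℕ}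

def SComplex.IsFacet (Δ : SComplex n) (F : Finset (Fin n)) : Prop :=
  F ∈ Δ.faces ∧ ∀ G ∈ Δ.faces, F ⊆ G → G = F

/-- Deletion of a vertex. -/
def SComplex.del (Δ : SComplex n) (x : Fin n) : SComplex n where
  faces := Δ.faces.filter (fun F => x ∉ F)
  down := by
    intro F hF G hG
    simp only [Finset.mem_filter] at *
    exact ⟨Δ.down F hF.1 G hG, fun hx => hF.2 (hG hx)⟩

/-- Link of a vertex. -/
def SComplex.lk (Δ : SComplex n) (x : Fin n) : SComplex n where
  faces := Δ.faces.filter (fun F => x ∉ F ∧ insert x F ∈ Δ.faces)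
  down := by
    intro F hF G hG
    simp only [Finset.mem_filter] at *
    refine ⟨Δ.down F hF.1 G hG, fun hx => hF.2.1 (hG hx), ?_⟩
    exact Δ.down _ hF.2.2 _ (Finset.insert_subset_insert x hG)

/-- Vertex decomposability, defined recursively via shedding vertices. -/
inductive VertexDecomposable : SComplex n → Prop
  | simplex (Δ : SComplex n) (F : Finset (Fin n)) :
      Δ.faces = F.powerset → VertexDecomposable Δ
  | shed (Δ : SComplex n) (x : Fin n) :
      VertexDecomposable (Δ.del x) → VertexDecomposable (Δ.lk x) →
      (∀ F ∈ (Δ.lk x).faces, ¬ (Δ.del x).IsFacet F) →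
      VertexDecomposable Δ

/-- Shellability (non-pure, Björner–Wachs). -/
def SComplex.Shellable (Δ : SComplex n) : Prop :=
  ∃ L : List (Finset (Fin n)), L.Nodup ∧ {F | F ∈ L} = {F | Δ.IsFacet F} ∧
    ∀ (i j : ℕ) (hi : i < L.length) (hj : j < L.length), i < j →
      ∃ x ∈ L.get ⟨j, hj⟩ \ L.get ⟨i, hi⟩,
        ∃ (l : ℕ) (hl : l < j),
          L.get ⟨j, hj⟩ \ L.get ⟨l, Nat.lt_trans hl hj⟩ = {x}

/-- The Alexander dual complex `Δ^∨ = { V \ A : A ∉ Δ }`. -/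
noncomputable def SComplex.dual (Δ : SComplex n) : SComplex n where
  faces := Finset.univ.filter (fun B => Bᶜ ∉ Δ.faces)
  down := by
    classical
    intro F hF G hG
    simp only [Finset.mem_filter, Finset.mem_univ, true_and] at *
    intro hGc
    exact hF (Δ.down _ hGc _ (Finset.compl_subset_compl.2 hG))


/-- The squarefree exponent vector of a set of vertices. -/
noncomputable def sqmon {n : ℕ} (F : Finset (Fin n)) : Fin n →₀ ℕ :=
  ∑ i ∈ F, Finsupp.single i 1

/-- The Stanley–Reisner ideal of `Δ`. -/
noncomputable def srIdeal (K : Type) [Field K] {n : ℕ} (Δ : SComplex n) :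
    Ideal (MvPolynomial (Fin n) K) :=
  Ideal.span ((fun F => mon K (sqmon F)) '' {F | F ∉ Δ.faces})


section CM
variable (A : Type) [CommRing A]

/-- Krull dimension of a module: the dimension of `A / ann M`. -/
noncomputable def moduleDim (M : Type) [AddCommGroup M] [Module A M] : WithBot ℕ∞ :=
  ringKrullDim (A ⧸ Submodule.annihilator (⊤ : Submodule A M))

/-- `rs` is an `M`-regular sequence: each entry is a nonzerodivisor on the quotient
of `M` by the previous entries. -/
def IsRegSeq (M : Type) [AddCommGroup M] [Module A M] (rs : List A) : Prop :=
  ∀ (i : ℕ) (hi : i < rs.length),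
    ∀ m : M ⧸ (Ideal.span {r | r ∈ rs.take i} • (⊤ : Submodule A M)),
      rs.get ⟨i, hi⟩ • m = 0 → m = 0

/-- Depth of `M` with respect to the ideal `J`: the supremum of lengths of
`M`-regular sequences contained in `J`. -/
noncomputable def moduleDepth (J : Ideal A) (M : Type) [AddCommGroup M] [Module A M] : ℕ :=
  sSup {k | ∃ rs : List A, rs.length = k ∧ (∀ r ∈ rs, r ∈ J) ∧ IsRegSeq A M rs}

/-- Cohen–Macaulay module (with respect to the ideal `J` playing the role of the
maximal ideal): zero, or depth equals Krull dimension. -/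
def IsCMmod (J : Ideal A) (M : Type) [AddCommGroup M] [Module A M] : Prop :=
  Subsingleton M ∨ moduleDim A M = ((moduleDepth A J M : ℕ∞) : WithBot ℕ∞)

/-- Sequentially Cohen–Macaulay module: a filtration `0 = M₀ ⊂ ... ⊂ M_r = N` with
Cohen–Macaulay quotients of strictly increasing Krull dimension. -/
def IsSeqCM (J : Ideal A) (N : Type) [AddCommGroup N] [Module A N] : Prop :=
  ∃ (r : ℕ) (c : Fin (r + 1) → Submodule A N),
    c 0 = ⊥ ∧ c (Fin.last r) = ⊤ ∧
    (∀ i : Fin r, c i.castSucc ≤ c i.succ) ∧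
    (∀ i : Fin r,
      IsCMmod A J (↥(c i.succ) ⧸ (Submodule.comap (c i.succ).subtype (c i.castSucc)))) ∧
    (∀ i j : Fin r, i < j →
      moduleDim A (↥(c i.succ) ⧸ (Submodule.comap (c i.succ).subtype (c i.castSucc)))
        < moduleDim A (↥(c j.succ) ⧸ (Submodule.comap (c j.succ).subtype (c j.castSucc))))

end CM

variable {K : Type} [Field K] {n : ℕ}

/-- The irrelevant maximal ideal `(x_1, ..., x_n)`. -/
noncomputable def maxIdeal (K : Type) [Field K] (n : ℕ) : Ideal (MvPolynomial (Fin n) K) :=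
  Ideal.span (Set.range (X : Fin n → MvPolynomial (Fin n) K))

section Res

/-- The differential of a free complex given by a matrix of polynomials. -/
noncomputable def resDiff (β : ℕ → ℕ)
    (Mt : (i : ℕ) → Fin (β (i + 1)) → Fin (β i) → MvPolynomial (Fin n) K) (i : ℕ) :
    (Fin (β (i + 1)) →₀ MvPolynomial (Fin n) K) →ₗ[MvPolynomial (Fin n) K]
      (Fin (β i) →₀ MvPolynomial (Fin n) K) :=
  Finsupp.lsum (MvPolynomial (Fin n) K) fun j =>
    LinearMap.toSpanSingleton (MvPolynomial (Fin n) K) _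
      (∑ k : Fin (β i), Finsupp.single k (Mt i j k))

/-- The augmentation map sending basis elements to the generators `g`. -/
noncomputable def resAug (β₀ : ℕ) (g : Fin β₀ → MvPolynomial (Fin n) K) :
    (Fin β₀ →₀ MvPolynomial (Fin n) K) →ₗ[MvPolynomial (Fin n) K] MvPolynomial (Fin n) K :=
  Finsupp.lsum (MvPolynomial (Fin n) K) fun j =>
    LinearMap.toSpanSingleton (MvPolynomial (Fin n) K) _ (g j)

/-- A graded free resolution of the ideal `I`, recorded by Betti numbers `β`,
degree shifts `dg`, homogeneous generators `g` of `I`, and matrices `Mt` of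
homogeneous entries, which is exact. -/
structure GradedRes (I : Ideal (MvPolynomial (Fin n) K)) where
  β : ℕ → ℕ
  dg : (i : ℕ) → Fin (β i) → ℕ
  g : Fin (β 0) → MvPolynomial (Fin n) K
  hg : ∀ j, (g j).IsHomogeneous (dg 0 j)
  Mt : (i : ℕ) → Fin (β (i + 1)) → Fin (β i) → MvPolynomial (Fin n) K
  hMt : ∀ i j k, Mt i j k = 0 ∨
    (dg i k ≤ dg (i + 1) j ∧ (Mt i j k).IsHomogeneous (dg (i + 1) j - dg i k))
  hrange : LinearMap.range (resAug (β 0) g) = I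
  hexact0 : LinearMap.ker (resAug (β 0) g) = LinearMap.range (resDiff β Mt 0)
  hexact : ∀ i, LinearMap.ker (resDiff β Mt i) = LinearMap.range (resDiff β Mt (i + 1))

/-- Castelnuovo–Mumford regularity, as the infimum over all graded free
resolutions of the maximum of `(shift) - (homological degree)`. -/
noncomputable def reg (I : Ideal (MvPolynomial (Fin n) K)) : ℕ∞ :=
  sInf { r : ℕ∞ | ∃ Res : GradedRes I,
    ∀ (i : ℕ) (j : Fin (Res.β i)), (Res.dg i j : ℕ∞) ≤ r + i }

/-- `I` has a `d`-linear resolution. -/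
def HasLinearRes (I : Ideal (MvPolynomial (Fin n) K)) (d : ℕ) : Prop :=
  ∃ Res : GradedRes I, ∀ (i : ℕ) (j : Fin (Res.β i)), Res.dg i j = d + i

/-- The ideal generated by the degree-`d` elements of `I`. -/
noncomputable def compIdeal (I : Ideal (MvPolynomial (Fin n) K)) (d : ℕ) : Ideal (MvPolynomial (Fin n) K) :=
  Ideal.span { f | f ∈ I ∧ f.IsHomogeneous d }

/-- Componentwise linear ideal. -/
def ComponentwiseLinear (I : Ideal (MvPolynomial (Fin n) K)) : Prop :=
  ∀ d, compIdeal I d = ⊥ ∨ HasLinearRes (compIdeal I d) d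

end Res

/-!
Being squarefree, the two minimal generators are `x_U` and `x_V`, so `Δ` consists of the sets
containing neither `U` nor `V`. Complexes of subsets of `A` avoiding at most two nonempty sets are
closed under deletion (drop the avoided sets through `x`) and link (remove `x` from each avoided
set). A singleton `{x}` among the avoided sets just removes `x` from `A`. Otherwise take `x ∈ U`,
in `U ∩ V` if the two meet: then `U \ {x}` misses every avoided set not containing `x`, which makes
`x` a shedding vertex, and induction on `A` concludes.
-/

lemma mon_mem_of_le {I : Ideal (R K n)} {a b : Fin n →₀ ℕ} (ha : mon K a ∈ I) (hab : a ≤ b) :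
    mon K b ∈ I := by
  have hmul : mon K b = mon K (b - a) * mon K a := by
    rw [mon, mon, mon, monomial_mul, one_mul, tsub_add_cancel_of_le hab]
  exact hmul ▸ I.mul_mem_left _ ha

lemma mon_mem_span_mon_iff {S : Set (Fin n →₀ ℕ)} {a : Fin n →₀ ℕ} :
    mon K a ∈ Ideal.span (mon K '' S) ↔ ∃ s ∈ S, s ≤ a := by
  change monomial a 1 ∈ Ideal.span ((fun s => monomial s (1 : K)) '' S) ↔ _
  simp [mem_ideal_span_monomial_image]

lemma exists_mem_minGens_le {I : Ideal (R K n)} {a : Fin n →₀ ℕ} (ha : mon K a ∈ I) :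
    ∃ g ∈ minGens I, g ≤ a := by
  obtain ⟨g, hga, hg, hmin⟩ := exists_minimal_le_of_wellFoundedLT (fun b => mon K b ∈ I) a ha
  refine ⟨g, ⟨hg, fun b i hgb hb => ?_⟩, hga⟩
  have hbg : b ≤ g := hgb ▸ le_self_add
  rw [le_antisymm hbg (hmin hb hbg)] at hgb
  simpa using congrArg (· i) hgb

lemma eq_of_mem_minGens_of_le {I : Ideal (R K n)} {a b : Fin n →₀ ℕ} (ha : mon K a ∈ I)
    (hb : b ∈ minGens I) (hab : a ≤ b) : a = b := by
  by_contra hne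
  obtain ⟨i, hi⟩ : ∃ i, a i < b i := by
    by_contra! h
    exact hne (le_antisymm hab fun i => h i)
  have hsingle : Finsupp.single i 1 ≤ b := Finsupp.single_le_iff.mpr (by omega)
  refine hb.2 (b - Finsupp.single i 1) i (tsub_add_cancel_of_le hsingle).symm
    (mon_mem_of_le ha fun j => ?_)
  rw [Finsupp.tsub_apply, Finsupp.single_apply]
  split_ifs with hij
  · subst hij; omega
  · simpa using hab j

lemma sqmon_apply (F : Finset (Fin n)) (i : Fin n) : sqmon F i = if i ∈ F then 1 else 0 := by
  simp [sqmon, Finsupp.finsetSum_apply, Finsupp.single_apply]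

lemma sqmon_le_sqmon_iff {F G : Finset (Fin n)} : sqmon F ≤ sqmon G ↔ F ⊆ G := by
  refine ⟨fun h i hi => ?_, fun h i => ?_⟩
  · by_contra hiG
    simpa [sqmon_apply, hi, hiG] using h i
  · by_cases hi : i ∈ F
    · simp [sqmon_apply, hi, h hi]
    · simp [sqmon_apply, hi]

lemma srIdeal_eq_span_mon (Δ : SComplex n) :
    srIdeal K Δ = Ideal.span (mon K '' (sqmon '' {F | F ∉ Δ.faces})) := by
  rw [srIdeal, Set.image_image]

lemma mon_sqmon_mem_srIdeal_iff (Δ : SComplex n) (F : Finset (Fin n)) :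
    mon K (sqmon F) ∈ srIdeal K Δ ↔ F ∉ Δ.faces := by
  rw [srIdeal_eq_span_mon, mon_mem_span_mon_iff]
  constructor
  · rintro ⟨_, ⟨G, hG, rfl⟩, hGF⟩ hF
    exact hG (Δ.down F hF G (sqmon_le_sqmon_iff.mp hGF))
  · exact fun hF => ⟨sqmon F, ⟨F, hF, rfl⟩, le_rfl⟩

lemma exists_eq_sqmon_of_mem_minGens {Δ : SComplex n} {a : Fin n →₀ ℕ}
    (ha : a ∈ minGens (srIdeal K Δ)) : ∃ G, a = sqmon G := by
  have hmem := ha.1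
  rw [srIdeal_eq_span_mon, mon_mem_span_mon_iff] at hmem
  obtain ⟨_, ⟨G, hG, rfl⟩, hGa⟩ := hmem
  exact ⟨G, (eq_of_mem_minGens_of_le ((mon_sqmon_mem_srIdeal_iff Δ G).2 hG) ha hGa).symm⟩

lemma mem_faces_iff_forall_minGens (Δ : SComplex n) (F : Finset (Fin n)) :
    F ∈ Δ.faces ↔ ∀ a ∈ minGens (srIdeal K Δ), ¬ a ≤ sqmon F := by
  rw [← not_iff_not, ← mon_sqmon_mem_srIdeal_iff (K := K)]
  simp only [not_forall, not_not, exists_prop]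
  exact ⟨exists_mem_minGens_le, fun ⟨a, ha, haF⟩ => mon_mem_of_le ha.1 haF⟩

namespace SComplex

@[ext]
lemma ext {Δ Γ : SComplex n} (h : Δ.faces = Γ.faces) : Δ = Γ := by
  cases Δ; cases Γ; cases h; rfl

lemma del_eq_self {Δ : SComplex n} {x : Fin n} (hx : {x} ∉ Δ.faces) : Δ.del x = Δ := by
  ext F
  refine ⟨fun hF => (Finset.mem_filter.1 hF).1, fun hF => Finset.mem_filter.2 ⟨hF, fun hxF => ?_⟩⟩
  exact hx (Δ.down F hF {x} (Finset.singleton_subset_iff.2 hxF))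

/-- The complex whose Stanley–Reisner ideal is generated by the `x_U`, `U ∈ 𝒰`, and the variables
outside `A`. -/
def avoiding (A : Finset (Fin n)) (𝒰 : Finset (Finset (Fin n))) : SComplex n where
  faces := A.powerset.filter fun F => ∀ U ∈ 𝒰, ¬ U ⊆ F
  down F hF G hGF := by
    simp only [Finset.mem_filter, Finset.mem_powerset] at hF ⊢
    exact ⟨hGF.trans hF.1, fun U hU hUG => hF.2 U hU (hUG.trans hGF)⟩

variable {A : Finset (Fin n)} {𝒰 : Finset (Finset (Fin n))} {x : Fin n}

@[simp]
lemma mem_avoiding_faces {F : Finset (Fin n)} :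
    F ∈ (avoiding A 𝒰).faces ↔ F ⊆ A ∧ ∀ U ∈ 𝒰, ¬ U ⊆ F := by
  simp [avoiding]

lemma avoiding_empty_faces : (avoiding A ∅).faces = A.powerset := by
  ext F; simp

lemma del_avoiding : (avoiding A 𝒰).del x = avoiding (A.erase x) (𝒰.filter (x ∉ ·)) := by
  ext F
  simp only [del, Finset.mem_filter, mem_avoiding_faces, Finset.subset_erase]
  constructor
  · rintro ⟨⟨hFA, hF⟩, hxF⟩
    exact ⟨⟨hFA, hxF⟩, fun U hU => hF U hU.1⟩
  · rintro ⟨⟨hFA, hxF⟩, hF⟩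
    exact ⟨⟨hFA, fun U hU hUF => hF U ⟨hU, fun hxU => hxF (hUF hxU)⟩ hUF⟩, hxF⟩

lemma lk_avoiding (hx : x ∈ A) :
    (avoiding A 𝒰).lk x = avoiding (A.erase x) (𝒰.image (·.erase x)) := by
  ext F
  simp only [lk, Finset.mem_filter, mem_avoiding_faces, Finset.subset_erase,
    Finset.mem_image, forall_exists_index, and_imp, forall_apply_eq_imp_iff₂,
    Finset.insert_subset_iff, Finset.subset_insert_iff]
  constructor
  · rintro ⟨⟨hFA, -⟩, hxF, -, hF⟩
    exact ⟨⟨hFA, hxF⟩, hF⟩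
  · rintro ⟨⟨hFA, hxF⟩, hF⟩
    exact ⟨⟨hFA, fun U hU hUF => hF U hU ((U.erase_subset x).trans hUF)⟩, hxF, ⟨hx, hFA⟩, hF⟩

/-- A face `F` of the link misses some `u ∈ U \ {x}`, and `insert u F` is still a face of the
deletion. -/
lemma not_isFacet_del_of_mem_lk_avoiding {U : Finset (Fin n)} (hU : U ∈ 𝒰) (hxU : x ∈ U)
    (hUA : U ⊆ A) (hdisj : ∀ W ∈ 𝒰, x ∉ W → Disjoint (U.erase x) W) :
    ∀ F ∈ ((avoiding A 𝒰).lk x).faces, ¬ ((avoiding A 𝒰).del x).IsFacet F := by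
  intro F hF hfacet
  rw [lk_avoiding (hUA hxU), mem_avoiding_faces] at hF
  obtain ⟨u, huU, huF⟩ := Finset.not_subset.1 (hF.2 _ (Finset.mem_image_of_mem _ hU))
  have hFdel := hfacet.1
  rw [del_avoiding, mem_avoiding_faces] at hFdel
  have hins : insert u F ∈ ((avoiding A 𝒰).del x).faces := by
    rw [del_avoiding, mem_avoiding_faces]
    refine ⟨Finset.insert_subset (Finset.erase_subset_erase x hUA huU) hFdel.1, fun W hW => ?_⟩
    have huW : u ∉ W := Finset.disjoint_left.1 (hdisj W (Finset.mem_filter.1 hW).1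
      (Finset.mem_filter.1 hW).2) huU
    rw [Finset.subset_insert_iff_of_notMem huW]
    exact hFdel.2 W hW
  exact huF (hfacet.2 _ hins (Finset.subset_insert u F) ▸ Finset.mem_insert_self u F)

end SComplex

lemma exists_mem_forall_disjoint_of_card_le_two {α : Type*} [DecidableEq α]
    {𝒰 : Finset (Finset α)} (h𝒰 : 𝒰.card ≤ 2) {U : Finset α} (hU : U ∈ 𝒰) (hUne : U.Nonempty) :
    ∃ x ∈ U, ∀ W ∈ 𝒰, x ∉ W → Disjoint U W := by
  by_cases hmeet : ∃ V ∈ 𝒰, V ≠ U ∧ ¬ Disjoint U V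
  · obtain ⟨V, hV, hVU, hUV⟩ := hmeet
    obtain ⟨x, hxU, hxV⟩ := Finset.not_disjoint_iff.1 hUV
    refine ⟨x, hxU, fun W hW hxW => absurd h𝒰 (not_le.2 (Finset.two_lt_card.2 ?_))⟩
    exact ⟨U, hU, V, hV, W, hW, hVU.symm, fun h => hxW (h ▸ hxU), fun h => hxW (h ▸ hxV)⟩
  · push Not at hmeet
    obtain ⟨x, hxU⟩ := hUne
    exact ⟨x, hxU, fun W hW hxW => hmeet W hW fun h => hxW (h ▸ hxU)⟩

theorem vertexDecomposable_avoiding (A : Finset (Fin n)) (𝒰 : Finset (Finset (Fin n)))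
    (h𝒰 : 𝒰.card ≤ 2) (hempty : ∅ ∉ 𝒰) (hsub : ∀ U ∈ 𝒰, U ⊆ A) :
    VertexDecomposable (SComplex.avoiding A 𝒰) := by
  induction A using Finset.strongInduction generalizing 𝒰 with
  | H A ih =>
    have hdel : ∀ x ∈ A, VertexDecomposable ((SComplex.avoiding A 𝒰).del x) := by
      intro x hxA
      rw [SComplex.del_avoiding]
      refine ih _ (Finset.erase_ssubset hxA) _ ((Finset.card_filter_le _ _).trans h𝒰)
        (fun h => hempty (Finset.mem_filter.1 h).1) fun W hW => ?_
      rw [Finset.mem_filter] at hW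
      exact Finset.subset_erase.2 ⟨hsub W hW.1, hW.2⟩
    obtain rfl | ⟨U, hU⟩ := 𝒰.eq_empty_or_nonempty
    · exact .simplex _ A SComplex.avoiding_empty_faces
    by_cases hsingle : ∃ x, {x} ∈ 𝒰
    · obtain ⟨x, hx⟩ := hsingle
      have hx_not_face : {x} ∉ (SComplex.avoiding A 𝒰).faces := fun h =>
        (SComplex.mem_avoiding_faces.1 h).2 _ hx subset_rfl
      rw [← SComplex.del_eq_self hx_not_face]
      exact hdel x (hsub _ hx (Finset.mem_singleton_self x))
    obtain ⟨x, hxU, hdisj⟩ := exists_mem_forall_disjoint_of_card_le_two h𝒰 hU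
      (Finset.nonempty_iff_ne_empty.2 fun h => hempty (h ▸ hU))
    have hxA : x ∈ A := hsub U hU hxU
    refine .shed _ x (hdel x hxA) ?_ (SComplex.not_isFacet_del_of_mem_lk_avoiding hU hxU
      (hsub U hU) fun W hW hxW => (hdisj W hW hxW).mono_left (U.erase_subset x))
    rw [SComplex.lk_avoiding hxA]
    refine ih _ (Finset.erase_ssubset hxA) _ (Finset.card_image_le.trans h𝒰) ?_ ?_
    · simp only [Finset.mem_image, Finset.erase_eq_empty_iff, not_exists, not_and]
      rintro W hW (rfl | rfl)
      exacts [hempty hW, hsingle ⟨x, hW⟩]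
    · simp only [Finset.mem_image, forall_exists_index, and_imp, forall_apply_eq_imp_iff₂]
      exact fun W hW => Finset.erase_subset_erase x (hsub W hW)

/-- If `I_Δ` is minimally generated by exactly two squarefree
monomials, then `Δ` is vertex decomposable. -/
theorem stmt7 {K : Type} [Field K] {n : ℕ} (Δ : SComplex n)
    (u v : Fin n →₀ ℕ) (huv : u ≠ v)
    (h : minGens (srIdeal K Δ) = {u, v}) :
    VertexDecomposable Δ := by
  have hu : u ∈ minGens (srIdeal K Δ) := h ▸ Set.mem_insert u {v}
  have hv : v ∈ minGens (srIdeal K Δ) := h ▸ Set.mem_insert_of_mem u rfl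
  obtain ⟨U, rfl⟩ := exists_eq_sqmon_of_mem_minGens hu
  obtain ⟨V, rfl⟩ := exists_eq_sqmon_of_mem_minGens hv
  have hΔ : Δ = SComplex.avoiding Finset.univ {U, V} := by
    ext F
    rw [mem_faces_iff_forall_minGens (K := K), h]
    simp [sqmon_le_sqmon_iff]
  have hUne : U ≠ ∅ := fun hU => huv <| eq_of_mem_minGens_of_le hu.1 hv <|
    sqmon_le_sqmon_iff.2 (hU ▸ Finset.empty_subset V)
  have hVne : V ≠ ∅ := fun hV => huv <| (eq_of_mem_minGens_of_le hv.1 hu <|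
    sqmon_le_sqmon_iff.2 (hV ▸ Finset.empty_subset U)).symm
  rw [hΔ]
  refine vertexDecomposable_avoiding _ _ Finset.card_le_two ?_ fun W _ => Finset.subset_univ W
  simp [hUne.symm, hVne.symm]

end Paper
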